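/- Let γ₁,…,γ_m be a complete set of representatives of the left cosets Γ_i = γ_i AΓA⁻¹ of AΓA⁻¹ in Γ, where m = |det A|. Then for row vectors {v_α} with v₀ ≠ 0, the condition y_{[s]}(γ_i) = A_{[s]} Σ_{γ∈Γ} y_{[s]}(γ) d_{AγA⁻¹γ_i⁻¹} for 0 ≤ s < p and i = 1,…,m is equivalent to the condition v_{[s]} = Σ_{γ∈Γ_i} Σ_{t=0}^{s} Q̃_{[s,t]}(γ⁻¹) A_{[t]} v_{[t]} d_{γ⁻¹} for 0 ≤ s < p and i = 1,…,m. -/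

import Mathlib

open scoped BigOperators
open Finset MeasureTheory

noncomputable section

/-- The vector `X_[s](x)` of all degree-`s` monomials of `x ∈ ℂ^d`, indexed by
multisets of size `s` over `Fin d` (i.e. `Sym (Fin d) s`). -/
def Xvec (d s : ℕ) (x : Fin d → ℂ) : Sym (Fin d) s → ℂ :=
  fun m => (Multiset.map x (m : Multiset (Fin d))).prod

/-- `X_[s]` applied to a real vector. -/
def XvecR (d s : ℕ) (x : Fin d → ℝ) : Sym (Fin d) s → ℂ :=
  Xvec d s fun i => (x i : ℂ)

/-- `Mt` is the matrix `M_[t]` induced by `M` on degree-`t` monomials, i.e.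
`X_[t](Mx) = M_[t] X_[t](x)` for all `x`. -/
def IsMonMat (d t : ℕ) (M : Matrix (Fin d) (Fin d) ℝ)
    (Mt : Matrix (Sym (Fin d) t) (Sym (Fin d) t) ℂ) : Prop :=
  ∀ x : Fin d → ℝ, XvecR d t (M.mulVec x) = Mt.mulVec (XvecR d t x)

/-- `Q` is the family of matrices `Q_[s,t](y)` defined by the expansion
`X_[s](x - y) = ∑_{t=0}^{s} Q_[s,t](y) X_[t](x)`. -/
def IsQfam (d : ℕ)
    (Q : (s : ℕ) → (t : ℕ) → (Fin d → ℝ) → Matrix (Sym (Fin d) s) (Sym (Fin d) t) ℂ) : Prop :=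
  ∀ (s : ℕ) (y x : Fin d → ℝ),
    XvecR d s (x - y) = ∑ t ∈ Finset.range (s + 1), (Q s t y).mulVec (XvecR d t x)

/-- A complex square matrix is expansive if all of its eigenvalues (roots of the
characteristic polynomial) have modulus strictly greater than `1`. -/
def ExpansiveC {n : Type*} [Fintype n] [DecidableEq n] (M : Matrix n n ℂ) : Prop :=
  ∀ μ : ℂ, M.charpoly.IsRoot μ → 1 < ‖μ‖

/-- A real square matrix is expansive if all of its complex eigenvalues have
modulus strictly greater than `1`. -/
def ExpansiveR {n : Type*} [Fintype n] [DecidableEq n] (M : Matrix n n ℝ) : Prop :=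
  ExpansiveC (M.map (algebraMap ℝ ℂ))

/-- Elements of a splitting crystal group `Γ = G ⋉ Λ`, written as pairs
`γ = (b, l)` with `b` a matrix (the point part) and `l` a vector. -/
abbrev CrystElem (d : ℕ) := Matrix (Fin d) (Fin d) ℝ × (Fin d → ℝ)

/-- The action `γ(x) = b(x + l)` of `γ = (b, l)`. -/
def crystAct {d : ℕ} (γ : CrystElem d) (x : Fin d → ℝ) : Fin d → ℝ :=
  γ.1.mulVec (x + γ.2)

/-- The product `(b₂,l₂)·(b₁,l₁) = (b₂b₁, l₁ + b₁⁻¹ l₂)` (composition of the actions). -/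
def crystMul {d : ℕ} (γ₂ γ₁ : CrystElem d) : CrystElem d :=
  (γ₂.1 * γ₁.1, γ₁.2 + (γ₁.1)⁻¹.mulVec γ₂.2)

/-- The inverse `(b,l)⁻¹ = (b⁻¹, -b l)`. -/
def crystInv {d : ℕ} (γ : CrystElem d) : CrystElem d :=
  ((γ.1)⁻¹, -(γ.1.mulVec γ.2))

/-- Conjugation by an invertible matrix `A`:
`A (b,l) A⁻¹ = (A b A⁻¹, (A b A⁻¹)⁻¹ (A b l))`. -/
def crystConj {d : ℕ} (A : Matrix (Fin d) (Fin d) ℝ) (γ : CrystElem d) : CrystElem d :=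
  (A * γ.1 * A⁻¹, (A * γ.1 * A⁻¹)⁻¹.mulVec ((A * γ.1).mulVec γ.2))

/-- `(G, Λ)` are the data of a splitting crystal group `Γ = G ⋉ Λ`: `G` is a
finite group of orthogonal matrices and `Λ` is a full-rank lattice preserved by `G`. -/
def IsSplittingCrystal (d : ℕ) (G : Finset (Matrix (Fin d) (Fin d) ℝ))
    (Λ : Set (Fin d → ℝ)) : Prop :=
  (1 : Matrix (Fin d) (Fin d) ℝ) ∈ G ∧
  (∀ b ∈ G, ∀ b' ∈ G, b * b' ∈ G) ∧
  (∀ b ∈ G, b⁻¹ ∈ G) ∧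
  (∀ b ∈ G, b * b.transpose = 1) ∧
  (∃ R : Matrix (Fin d) (Fin d) ℝ, IsUnit R.det ∧
      Λ = {v | ∃ k : Fin d → ℤ, v = R.mulVec fun i => (k i : ℝ)}) ∧
  (∀ b ∈ G, ∀ l ∈ Λ, b.mulVec l ∈ Λ)

/-- The underlying set of `Γ = G ⋉ Λ`. -/
def crystSet {d : ℕ} (G : Finset (Matrix (Fin d) (Fin d) ℝ)) (Λ : Set (Fin d → ℝ)) :
    Set (CrystElem d) := {γ | γ.1 ∈ G ∧ γ.2 ∈ Λ}

/-- `A` is a `Γ`-admissible matrix: expansive and `AΓA⁻¹ ⊆ Γ`. -/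
def IsAdmissible {d : ℕ} (G : Finset (Matrix (Fin d) (Fin d) ℝ)) (Λ : Set (Fin d → ℝ))
    (A : Matrix (Fin d) (Fin d) ℝ) : Prop :=
  ExpansiveR A ∧ ∀ γ ∈ crystSet G Λ, crystConj A γ ∈ crystSet G Λ

/-- The rows `v_α`, `|α| = t`, grouped into the `d_t × r` matrix `v_[t]`;
a multiset `m : Sym (Fin d) t` corresponds to the multi-index `α j = count j m`. -/
def vmat (d r : ℕ) (v : (Fin d → ℕ) → Fin r → ℂ) (t : ℕ) :
    Matrix (Sym (Fin d) t) (Fin r) ℂ :=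
  Matrix.of fun m i => v (fun j => Multiset.count j (m : Multiset (Fin d))) i

/-- `y_[s](γ) = ∑_{t=0}^{s} Q̃_[s,t](γ) v_[t]`, where `Q̃_[s,t]((b,l)) = Q_[s,t](l) b_[t]⁻¹`. -/
def yMat (d r : ℕ)
    (Q : (s : ℕ) → (t : ℕ) → (Fin d → ℝ) → Matrix (Sym (Fin d) s) (Sym (Fin d) t) ℂ)
    (Bm : Matrix (Fin d) (Fin d) ℝ → (t : ℕ) → Matrix (Sym (Fin d) t) (Sym (Fin d) t) ℂ)
    (v : (Fin d → ℕ) → Fin r → ℂ) (s : ℕ) (γ : CrystElem d) :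
    Matrix (Sym (Fin d) s) (Fin r) ℂ :=
  ∑ t ∈ Finset.range (s + 1), Q s t γ.2 * (Bm γ.1 t)⁻¹ * vmat d r v t

/-- `f` has accuracy `p`: every monomial (hence every polynomial) of degree `< p`
is an a.e. linear combination of the `Γ`-translates of the components of `f`. -/
def HasAccuracyVec (d r p : ℕ) (Γ : Set (CrystElem d))
    (f : (Fin d → ℝ) → Fin r → ℂ) : Prop :=
  ∀ α : Fin d → ℕ, (∑ i, α i) < p →
    ∃ w : CrystElem d → Fin r → ℂ,
      ∀ᵐ x ∂(MeasureTheory.volume : MeasureTheory.Measure (Fin d → ℝ)),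
        (∏ i, (x i : ℂ) ^ α i) = ∑ᶠ γ ∈ Γ, ∑ i, w γ i * f (crystAct γ x) i

/-- The `Γ`-translates of `f` are independent. -/
def IndepTranslates (d r : ℕ) (Γ : Set (CrystElem d))
    (f : (Fin d → ℝ) → Fin r → ℂ) : Prop :=
  ∀ w : CrystElem d → Fin r → ℂ, (∀ γ ∉ Γ, w γ = 0) →
    (∀ᵐ x ∂(MeasureTheory.volume : MeasureTheory.Measure (Fin d → ℝ)),
      (∑ᶠ γ ∈ Γ, ∑ i, w γ i * f (crystAct γ x) i) = 0) → ∀ γ, w γ = 0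

/-- `f` satisfies the `Γ`-refinement equation `f(x) = ∑_{γ∈Γ} d_γ f(γ⁻¹(Ax))`
with finitely many nonzero `r × r` matrix coefficients `D γ`. -/
def IsRefinableVec (d r : ℕ) (Γ : Set (CrystElem d)) (A : Matrix (Fin d) (Fin d) ℝ)
    (D : CrystElem d → Matrix (Fin r) (Fin r) ℂ)
    (f : (Fin d → ℝ) → Fin r → ℂ) : Prop :=
  {γ | D γ ≠ 0}.Finite ∧ (∀ γ, D γ ≠ 0 → γ ∈ Γ) ∧
    ∀ᵐ x ∂(MeasureTheory.volume : MeasureTheory.Measure (Fin d → ℝ)),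
      f x = ∑ᶠ γ ∈ Γ, (D γ).mulVec (f (crystAct (crystInv γ) (A.mulVec x)))

/-- `P` is a compact fundamental domain for `Γ`. -/
def IsFundDom (d : ℕ) (Γ : Set (CrystElem d)) (P : Set (Fin d → ℝ)) : Prop :=
  IsCompact P ∧ (⋃ γ ∈ Γ, crystAct γ '' P) = Set.univ ∧
    ∀ γ₁ ∈ Γ, ∀ γ₂ ∈ Γ, γ₁ ≠ γ₂ →
      MeasureTheory.volume (crystAct γ₁ '' P ∩ crystAct γ₂ '' P) = 0

/-- The eigenvector equations `Y_[s] = A_[s] Y_[s] L`, written entrywise: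
`y_[s](σ) = A_[s] ∑_{γ∈Γ} y_[s](γ) d_{AγA⁻¹σ⁻¹}` for all `σ ∈ Γ`. -/
def Yeq (d r : ℕ) (Γ : Set (CrystElem d)) (A : Matrix (Fin d) (Fin d) ℝ)
    (Q : (s : ℕ) → (t : ℕ) → (Fin d → ℝ) → Matrix (Sym (Fin d) s) (Sym (Fin d) t) ℂ)
    (Bm : Matrix (Fin d) (Fin d) ℝ → (t : ℕ) → Matrix (Sym (Fin d) t) (Sym (Fin d) t) ℂ)
    (Am : (t : ℕ) → Matrix (Sym (Fin d) t) (Sym (Fin d) t) ℂ)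
    (D : CrystElem d → Matrix (Fin r) (Fin r) ℂ)
    (v : (Fin d → ℕ) → Fin r → ℂ) (s : ℕ) : Prop :=
  ∀ σ ∈ Γ, yMat d r Q Bm v s σ =
    Am s * ∑ᶠ γ ∈ Γ, yMat d r Q Bm v s γ * D (crystMul (crystConj A γ) (crystInv σ))

/-!
Write `Q̃(γ)` for the block lower-triangular family with
`X_[s](γ⁻¹ x) = ∑_{t ≤ s} Q̃_[s,t](γ) X_[t](x)`. Since monomials are linearly independent, such
expansions are unique, so composing maps corresponds to the triangular block product of their
expansions. Hence `Q̃(σ⁻¹) Q̃(σ)` is the identity, giving `v_[s] = ∑_u Q̃_[s,u](σ⁻¹) y_[u](σ)`; and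
writing the elements of the coset `σ AΓA⁻¹` as `(AγA⁻¹σ⁻¹)⁻¹`, the right-hand side of the second
condition becomes `∑_u Q̃_[s,u](σ⁻¹) A_[u] ∑_γ y_[u](γ) d_{AγA⁻¹σ⁻¹}`. So for each digit `σ = γ_i`
the second system is the first one multiplied by the block-triangular `Q̃(σ⁻¹)`, whose diagonal
blocks are invertible, and the two are equivalent degree by degree.
-/

open scoped Matrix

section MonomialIndependence

variable {d : ℕ}

lemma XvecR_eq_eval_monomial (t : ℕ) (x : Fin d → ℝ) (m : Sym (Fin d) t) :
    XvecR d t x m = MvPolynomial.eval (fun i => (x i : ℂ))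
      (MvPolynomial.monomial (Multiset.toFinsupp (m : Multiset (Fin d))) 1) := by
  rw [MvPolynomial.eval_monomial, one_mul, Finsupp.prod, Multiset.toFinsupp_support,
    XvecR, Xvec, Finset.prod_multiset_map_count]
  exact Finset.prod_congr rfl fun i _ => by rw [Multiset.toFinsupp_apply]

theorem eq_zero_of_sum_mul_XvecR_eq_zero (T : Finset ℕ) (c : ∀ t, Sym (Fin d) t → ℂ)
    (h : ∀ x : Fin d → ℝ, ∑ t ∈ T, ∑ m, c t m * XvecR d t x m = 0) :
    ∀ t ∈ T, ∀ m, c t m = 0 := by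
  set q : MvPolynomial (Fin d) ℂ :=
    ∑ t ∈ T, ∑ m : Sym (Fin d) t,
      MvPolynomial.monomial (Multiset.toFinsupp (m : Multiset (Fin d))) (c t m)
  have hq : q = 0 := by
    refine MvPolynomial.funext_set (fun _ => Set.range ((↑) : ℝ → ℂ))
      (fun _ => Set.infinite_range_of_injective Complex.ofReal_injective) fun z hz => ?_
    choose x hx using fun i => hz i (Set.mem_univ i)
    obtain rfl : (fun i => (x i : ℂ)) = z := funext hx
    simp only [q, map_sum, map_zero, ← h x, XvecR_eq_eval_monomial, ← MvPolynomial.smul_eval,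
      MvPolynomial.smul_monomial, smul_eq_mul, mul_one]
  intro t₀ ht₀ m₀
  have hcoeff := congrArg (MvPolynomial.coeff (Multiset.toFinsupp (m₀ : Multiset (Fin d)))) hq
  simp only [q, MvPolynomial.coeff_sum, MvPolynomial.coeff_monomial, MvPolynomial.coeff_zero,
    EmbeddingLike.apply_eq_iff_eq] at hcoeff
  rwa [Finset.sum_eq_single t₀, Finset.sum_eq_single m₀, if_pos rfl] at hcoeff
  · exact fun m _ hm => if_neg fun h => hm (Sym.coe_injective h)
  · exact fun h => absurd (Finset.mem_univ m₀) h
  · refine fun t _ ht => Finset.sum_eq_zero fun m _ => if_neg fun h => ht ?_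
    simpa using congrArg Multiset.card h
  · exact fun h => absurd ht₀ h

theorem eq_of_forall_sum_mulVec_XvecR_eq {ι : Type*} (T : Finset ℕ)
    (M N : ∀ t, Matrix ι (Sym (Fin d) t) ℂ)
    (h : ∀ x, ∑ t ∈ T, M t *ᵥ XvecR d t x = ∑ t ∈ T, N t *ᵥ XvecR d t x) :
    ∀ t ∈ T, M t = N t := by
  intro t ht
  ext a m
  refine sub_eq_zero.mp <|
    eq_zero_of_sum_mul_XvecR_eq_zero T (fun t m => M t a m - N t a m) (fun x => ?_) t ht m
  have hx := congrFun (h x) a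
  simp only [Finset.sum_apply, Matrix.mulVec, dotProduct] at hx
  simp only [sub_mul, Finset.sum_sub_distrib, hx, sub_self]

theorem eq_of_forall_mulVec_XvecR_eq {ι : Type*} {t : ℕ} {M N : Matrix ι (Sym (Fin d) t) ℂ}
    (h : ∀ x, M *ᵥ XvecR d t x = N *ᵥ XvecR d t x) : M = N := by
  classical
  simpa using eq_of_forall_sum_mulVec_XvecR_eq {t}
    (fun u => if hu : t = u then hu ▸ M else 0) (fun u => if hu : t = u then hu ▸ N else 0)
    (by simpa using h) t (Finset.mem_singleton_self t)

end MonomialIndependence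

section DegreeBlocks

variable {d : ℕ}

abbrev DegreeBlocks (d : ℕ) := (s t : ℕ) → Matrix (Sym (Fin d) s) (Sym (Fin d) t) ℂ

def IsMonomialExpansion (M : DegreeBlocks d) (φ : (Fin d → ℝ) → Fin d → ℝ) : Prop :=
  ∀ s x, XvecR d s (φ x) = ∑ t ∈ range (s + 1), M s t *ᵥ XvecR d t x

def blockMul (M N : DegreeBlocks d) : DegreeBlocks d :=
  fun s t => ∑ u ∈ Icc t s, M s u * N u t

-- Comparing underlying multisets avoids casting between `Sym (Fin d) s` and `Sym (Fin d) t`.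
def blockOne (d : ℕ) : DegreeBlocks d :=
  fun _ _ => Matrix.of fun a b => if (a : Multiset (Fin d)) = b then 1 else 0

lemma sum_range_sum_Icc_comm {β : Type*} [AddCommMonoid β] (s : ℕ) (f : ℕ → ℕ → β) :
    ∑ t ∈ range (s + 1), ∑ u ∈ Icc t s, f u t =
      ∑ u ∈ range (s + 1), ∑ t ∈ range (u + 1), f u t :=
  Finset.sum_comm' fun t u => by simp only [mem_range, mem_Icc]; omega

lemma sum_blockMul_mul {κ : Type*} (M N : DegreeBlocks d)
    (w : ∀ t, Matrix (Sym (Fin d) t) κ ℂ) (s : ℕ) :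
    ∑ t ∈ range (s + 1), blockMul M N s t * w t =
      ∑ u ∈ range (s + 1), M s u * ∑ t ∈ range (u + 1), N u t * w t := by
  simp only [blockMul, Matrix.sum_mul, Matrix.mul_sum, Matrix.mul_assoc]
  exact sum_range_sum_Icc_comm s _

lemma blockOne_self (s : ℕ) : blockOne d s s = (1 : Matrix (Sym (Fin d) s) _ ℂ) := by
  ext a b
  simp [blockOne, Matrix.one_apply, Sym.coe_inj]

lemma blockOne_of_lt {s t : ℕ} (h : t < s) : blockOne d s t = (0 : Matrix (Sym (Fin d) s) _ ℂ) := by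
  ext a b
  refine if_neg fun hab => h.ne' ?_
  simpa using congrArg Multiset.card hab

lemma sum_blockOne_mul {κ : Type*} (w : ∀ t, Matrix (Sym (Fin d) t) κ ℂ) (s : ℕ) :
    ∑ t ∈ range (s + 1), blockOne d s t * w t = w s := by
  rw [sum_range_succ, blockOne_self, Matrix.one_mul, add_eq_right]
  exact sum_eq_zero fun t ht => by rw [blockOne_of_lt (mem_range.mp ht), Matrix.zero_mul]

theorem isMonomialExpansion_blockOne : IsMonomialExpansion (blockOne d) id := by
  intro s x
  rw [sum_range_succ, blockOne_self, Matrix.one_mulVec, id_eq, right_eq_add]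
  exact sum_eq_zero fun t ht => by rw [blockOne_of_lt (mem_range.mp ht), Matrix.zero_mulVec]

namespace IsMonomialExpansion

variable {M N : DegreeBlocks d} {φ ψ : (Fin d → ℝ) → Fin d → ℝ}

theorem unique (hM : IsMonomialExpansion M φ) (hN : IsMonomialExpansion N φ) {s t : ℕ}
    (hts : t ≤ s) : M s t = N s t :=
  eq_of_forall_sum_mulVec_XvecR_eq (range (s + 1)) (M s) (N s)
    (fun x => (hM s x).symm.trans (hN s x)) t (mem_range_succ_iff.mpr hts)

theorem comp (hM : IsMonomialExpansion M φ) (hN : IsMonomialExpansion N ψ) :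
    IsMonomialExpansion (blockMul M N) (φ ∘ ψ) := by
  intro s x
  simp only [Function.comp_apply, hM s, fun u => hN u x, blockMul, Matrix.sum_mulVec,
    Matrix.mulVec_sum, Matrix.mulVec_mulVec]
  exact (sum_range_sum_Icc_comm s _).symm

theorem comp_mulVec (hM : IsMonomialExpansion M φ) {A : Matrix (Fin d) (Fin d) ℝ}
    {Am : (t : ℕ) → Matrix (Sym (Fin d) t) (Sym (Fin d) t) ℂ} (hA : ∀ t, IsMonMat d t A (Am t)) :
    IsMonomialExpansion (fun s t => M s t * Am t) (φ ∘ (A *ᵥ ·)) := by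
  intro s x
  rw [Function.comp_apply, hM s]
  exact sum_congr rfl fun t _ => by rw [hA t x, Matrix.mulVec_mulVec]

theorem mulVec_comp (hM : IsMonomialExpansion M φ) {A : Matrix (Fin d) (Fin d) ℝ}
    {Am : (t : ℕ) → Matrix (Sym (Fin d) t) (Sym (Fin d) t) ℂ} (hA : ∀ t, IsMonMat d t A (Am t)) :
    IsMonomialExpansion (fun s t => Am s * M s t) ((A *ᵥ ·) ∘ φ) := by
  intro s x
  simp only [Function.comp_apply, hA s (φ x), hM s, Matrix.mulVec_sum, Matrix.mulVec_mulVec]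

end IsMonomialExpansion

theorem IsMonMat.inv_eq {t : ℕ} {b : Matrix (Fin d) (Fin d) ℝ}
    {Mb Mb' : Matrix (Sym (Fin d) t) (Sym (Fin d) t) ℂ} (hb : IsUnit b.det)
    (h : IsMonMat d t b Mb) (h' : IsMonMat d t b⁻¹ Mb') : Mb⁻¹ = Mb' :=
  Matrix.inv_eq_right_inv <| eq_of_forall_mulVec_XvecR_eq fun x => by
    rw [← Matrix.mulVec_mulVec, ← h', ← h, Matrix.mulVec_mulVec, Matrix.mul_nonsing_inv _ hb,
      Matrix.one_mulVec, Matrix.one_mulVec]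

end DegreeBlocks

section CrystalGroup

variable {d : ℕ} {A : Matrix (Fin d) (Fin d) ℝ} {γ γ' σ : CrystElem d}

lemma isUnit_det_crystInv (h : IsUnit γ.1.det) : IsUnit (crystInv γ).1.det :=
  Matrix.isUnit_nonsing_inv_det _ h

lemma isUnit_det_crystConj (hA : IsUnit A.det) (h : IsUnit γ.1.det) :
    IsUnit (crystConj A γ).1.det := by
  simpa [crystConj, Matrix.det_mul] using (hA.mul h).mul (Matrix.isUnit_nonsing_inv_det _ hA)

lemma isUnit_det_crystMul (h' : IsUnit γ'.1.det) (h : IsUnit γ.1.det) :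
    IsUnit (crystMul γ' γ).1.det := by
  simpa [crystMul, Matrix.det_mul] using h'.mul h

lemma crystInv_crystInv (h : IsUnit γ.1.det) : crystInv (crystInv γ) = γ := by
  refine Prod.ext (Matrix.nonsing_inv_nonsing_inv _ h) ?_
  simp [crystInv, Matrix.mulVec_neg, Matrix.nonsing_inv_mul _ h]

lemma crystInv_crystMul (h' : IsUnit γ'.1.det) (h : IsUnit γ.1.det) :
    crystInv (crystMul γ' γ) = crystMul (crystInv γ) (crystInv γ') := by
  refine Prod.ext (Matrix.mul_inv_rev _ _) ?_
  simp only [crystInv, crystMul, Matrix.nonsing_inv_nonsing_inv _ h', Matrix.mulVec_add,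
    Matrix.mulVec_neg, Matrix.mulVec_mulVec, Matrix.mul_nonsing_inv_cancel_right _ _ h]
  abel

lemma crystConj_eq (hA : IsUnit A.det) (h : IsUnit γ.1.det) :
    crystConj A γ = (A * γ.1 * A⁻¹, A *ᵥ γ.2) := by
  refine Prod.ext rfl ?_
  simp only [crystConj, Matrix.mul_inv_rev, Matrix.nonsing_inv_nonsing_inv _ hA,
    Matrix.mulVec_mulVec, Matrix.mul_assoc, Matrix.nonsing_inv_mul_cancel_left _ _ hA,
    Matrix.nonsing_inv_mul _ h, Matrix.mul_one]

lemma crystConj_crystInv (hA : IsUnit A.det) (h : IsUnit γ.1.det) :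
    crystConj A (crystInv γ) = crystInv (crystConj A γ) := by
  rw [crystConj_eq hA (isUnit_det_crystInv h), crystConj_eq hA h]
  refine Prod.ext ?_ ?_
  · simp [crystInv, Matrix.mul_inv_rev, Matrix.nonsing_inv_nonsing_inv _ hA, Matrix.mul_assoc]
  · simp [crystInv, Matrix.mulVec_neg, Matrix.mul_assoc, Matrix.nonsing_inv_mul _ hA]

lemma crystAct_crystInv (h : IsUnit γ.1.det) (x : Fin d → ℝ) :
    crystAct (crystInv γ) x = γ.1⁻¹ *ᵥ x - γ.2 := by
  simp [crystAct, crystInv, Matrix.mulVec_add, Matrix.mulVec_neg, Matrix.nonsing_inv_mul _ h,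
    sub_eq_add_neg]

lemma crystAct_crystAct_crystInv (h : IsUnit γ.1.det) (x : Fin d → ℝ) :
    crystAct γ (crystAct (crystInv γ) x) = x := by
  rw [crystAct_crystInv h]
  simp [crystAct, Matrix.mul_nonsing_inv _ h]

lemma crystAct_injective (h : IsUnit γ.1.det) : Function.Injective (crystAct γ) :=
  Function.LeftInverse.injective (g := crystAct (crystInv γ)) fun x => by
    simpa [crystInv_crystInv h] using crystAct_crystAct_crystInv (isUnit_det_crystInv h) x

lemma crystAct_crystMul (h : IsUnit γ.1.det) (x : Fin d → ℝ) :
    crystAct (crystMul γ' γ) x = crystAct γ' (crystAct γ x) := by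
  simp only [crystAct, crystMul, Matrix.mulVec_add, Matrix.mulVec_mulVec, Matrix.mul_assoc,
    Matrix.mul_nonsing_inv _ h, Matrix.mul_one]
  abel

lemma crystAct_crystConj_mulVec (hA : IsUnit A.det) (h : IsUnit γ.1.det) (x : Fin d → ℝ) :
    crystAct (crystConj A γ) (A *ᵥ x) = A *ᵥ crystAct γ x := by
  simp [crystConj_eq hA h, crystAct, ← Matrix.mulVec_add, Matrix.mulVec_mulVec, Matrix.mul_assoc,
    Matrix.nonsing_inv_mul _ hA]

lemma eq_of_crystAct_eq (h : IsUnit γ.1.det) (hact : crystAct γ = crystAct γ') : γ = γ' := by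
  have hlin : ∀ γ : CrystElem d, ∀ x, γ.1 *ᵥ x = crystAct γ x - crystAct γ 0 := fun γ x => by
    simp [crystAct, Matrix.mulVec_add]
  have hb : γ.1 = γ'.1 := Matrix.mulVec_injective <| funext fun x => by rw [hlin, hlin, hact]
  refine Prod.ext hb <| Matrix.mulVec_injective_of_isUnit
    ((Matrix.isUnit_iff_isUnit_det _).mpr h) ?_
  simpa [crystAct, hb] using congrFun hact 0

/-- The element `σ · Aγ⁻¹A⁻¹` of the coset `σ AΓA⁻¹` is the inverse of `AγA⁻¹ · σ⁻¹`. -/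
lemma crystInv_crystMul_crystConj (hA : IsUnit A.det) (hγ : IsUnit γ.1.det) (hσ : IsUnit σ.1.det) :
    crystInv (crystMul (crystConj A γ) (crystInv σ)) = crystMul σ (crystConj A (crystInv γ)) := by
  rw [crystInv_crystMul (isUnit_det_crystConj hA hγ) (isUnit_det_crystInv hσ),
    crystInv_crystInv hσ, crystConj_crystInv hA hγ]

lemma crystAct_crystMul_crystConj_mulVec (hA : IsUnit A.det) (hγ : IsUnit γ.1.det)
    (x : Fin d → ℝ) :
    crystAct (crystMul σ (crystConj A (crystInv γ))) (A *ᵥ x) =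
      crystAct σ (A *ᵥ crystAct (crystInv γ) x) := by
  rw [crystAct_crystMul (isUnit_det_crystConj hA (isUnit_det_crystInv hγ)),
    crystAct_crystConj_mulVec hA (isUnit_det_crystInv hγ)]

end CrystalGroup

theorem forall_lt_sum_range_mul_eq_iff {R : Type*} [Ring R] {ι : ℕ → Type*}
    [∀ s, Fintype (ι s)] [∀ s, DecidableEq (ι s)] {κ : Type*}
    (L : ∀ s u, Matrix (ι s) (ι u) R) (hL : ∀ s, ∃ K : Matrix (ι s) (ι s) R, K * L s s = 1)
    (y z : ∀ u, Matrix (ι u) κ R) (p : ℕ) :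
    (∀ s < p, ∑ u ∈ range (s + 1), L s u * y u = ∑ u ∈ range (s + 1), L s u * z u) ↔
      ∀ s < p, y s = z s := by
  refine ⟨fun h s => ?_, fun h s hs => sum_congr rfl fun u hu => ?_⟩
  · induction s using Nat.strong_induction_on with
    | _ s ih =>
      intro hs
      obtain ⟨K, hK⟩ := hL s
      have hlow : ∑ u ∈ range s, L s u * y u = ∑ u ∈ range s, L s u * z u :=
        sum_congr rfl fun u hu => by rw [ih u (mem_range.mp hu) ((mem_range.mp hu).trans hs)]
      have htop : L s s * y s = L s s * z s := by
        simpa only [sum_range_succ, hlow, add_right_inj] using h s hs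
      calc y s = K * L s s * y s := by rw [hK, Matrix.one_mul]
        _ = K * L s s * z s := by rw [Matrix.mul_assoc, htop, ← Matrix.mul_assoc]
        _ = z s := by rw [hK, Matrix.one_mul]
  · rw [h u (lt_of_le_of_lt (mem_range_succ_iff.mp hu) hs)]

section Qtilde

variable {d : ℕ}
  {Q : (s : ℕ) → (t : ℕ) → (Fin d → ℝ) → Matrix (Sym (Fin d) s) (Sym (Fin d) t) ℂ}
  {Bm : Matrix (Fin d) (Fin d) ℝ → (t : ℕ) → Matrix (Sym (Fin d) t) (Sym (Fin d) t) ℂ}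

variable (Q Bm) in
def Qtilde (γ : CrystElem d) : DegreeBlocks d :=
  fun s t => Q s t γ.2 * (Bm γ.1 t)⁻¹

lemma yMat_eq_sum_Qtilde_mul (r : ℕ) (v : (Fin d → ℕ) → Fin r → ℂ) (s : ℕ) (γ : CrystElem d) :
    yMat d r Q Bm v s γ = ∑ t ∈ range (s + 1), Qtilde Q Bm γ s t * vmat d r v t :=
  rfl

theorem isMonomialExpansion_Qtilde (hQ : IsQfam d Q) {γ : CrystElem d} (hγ : IsUnit γ.1.det)
    (hB : ∀ t, IsMonMat d t γ.1 (Bm γ.1 t)) (hB' : ∀ t, IsMonMat d t γ.1⁻¹ (Bm γ.1⁻¹ t)) :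
    IsMonomialExpansion (Qtilde Q Bm γ) (crystAct (crystInv γ)) := by
  intro s x
  rw [crystAct_crystInv hγ, hQ]
  refine sum_congr rfl fun t _ => ?_
  rw [Qtilde, (hB t).inv_eq hγ (hB' t), ← Matrix.mulVec_mulVec, ← hB' t]

end Qtilde

lemma IsAdmissible.isUnit_det {d : ℕ} {G : Finset (Matrix (Fin d) (Fin d) ℝ)}
    {Λ : Set (Fin d → ℝ)} {A : Matrix (Fin d) (Fin d) ℝ} (hA : IsAdmissible G Λ A) :
    IsUnit A.det := by
  refine isUnit_iff_ne_zero.mpr fun h0 => ?_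
  have hroot : (A.map (algebraMap ℝ ℂ)).charpoly.IsRoot 0 := by
    have hdet : (A.map Complex.ofReal).det = 0 := by
      have h := (RingHom.map_det Complex.ofRealHom A).symm
      rwa [h0, map_zero] at h
    simp [Polynomial.IsRoot, Matrix.eval_charpoly, Matrix.det_neg, hdet]
  exact absurd (hA.1 0 hroot) (by simp)

section SplittingCrystal

variable {d r : ℕ} {G : Finset (Matrix (Fin d) (Fin d) ℝ)} {Λ : Set (Fin d → ℝ)}
  {A : Matrix (Fin d) (Fin d) ℝ}
  {Q : (s : ℕ) → (t : ℕ) → (Fin d → ℝ) → Matrix (Sym (Fin d) s) (Sym (Fin d) t) ℂ}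
  {Bm : Matrix (Fin d) (Fin d) ℝ → (t : ℕ) → Matrix (Sym (Fin d) t) (Sym (Fin d) t) ℂ}
  {Am : (t : ℕ) → Matrix (Sym (Fin d) t) (Sym (Fin d) t) ℂ} {γ σ : CrystElem d}

lemma IsSplittingCrystal.isUnit_det (hcr : IsSplittingCrystal d G Λ)
    {b : Matrix (Fin d) (Fin d) ℝ} (hb : b ∈ G) : IsUnit b.det := by
  have h := congrArg Matrix.det (hcr.2.2.2.1 b hb)
  rw [Matrix.det_mul, Matrix.det_transpose, Matrix.det_one] at h
  exact .of_mul_eq_one _ h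

lemma IsSplittingCrystal.crystInv_mem (hcr : IsSplittingCrystal d G Λ)
    (hγ : γ ∈ crystSet G Λ) : crystInv γ ∈ crystSet G Λ := by
  refine ⟨hcr.2.2.1 _ hγ.1, ?_⟩
  obtain ⟨R, -, hΛ⟩ := hcr.2.2.2.2.1
  obtain ⟨k, hk⟩ := hΛ ▸ hcr.2.2.2.2.2 _ hγ.1 _ hγ.2
  refine hΛ ▸ ⟨-k, ?_⟩
  change -(γ.1 *ᵥ γ.2) = _
  rw [hk, ← Matrix.mulVec_neg]
  congr 1
  ext i
  simp

theorem isMonomialExpansion_Qtilde_of_mem (hcr : IsSplittingCrystal d G Λ) (hQ : IsQfam d Q)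
    (hBm : ∀ b ∈ G, ∀ t, IsMonMat d t b (Bm b t)) (hγ : γ.1 ∈ G) :
    IsMonomialExpansion (Qtilde Q Bm γ) (crystAct (crystInv γ)) :=
  isMonomialExpansion_Qtilde hQ (hcr.isUnit_det hγ) (hBm _ hγ) (hBm _ (hcr.2.2.1 _ hγ))

lemma blockMul_Qtilde_crystInv_Qtilde (hcr : IsSplittingCrystal d G Λ) (hQ : IsQfam d Q)
    (hBm : ∀ b ∈ G, ∀ t, IsMonMat d t b (Bm b t)) (hσ : σ.1 ∈ G) {s t : ℕ} (hts : t ≤ s) :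
    blockMul (Qtilde Q Bm (crystInv σ)) (Qtilde Q Bm σ) s t = blockOne d s t := by
  have hσu := hcr.isUnit_det hσ
  refine ((isMonomialExpansion_Qtilde_of_mem hcr hQ hBm (hcr.2.2.1 _ hσ)).comp
    (isMonomialExpansion_Qtilde_of_mem hcr hQ hBm hσ)).unique ?_ hts
  rw [crystInv_crystInv hσu]
  convert isMonomialExpansion_blockOne using 1
  exact funext (crystAct_crystAct_crystInv hσu)

lemma Qtilde_crystInv_mul_Qtilde_self (hcr : IsSplittingCrystal d G Λ) (hQ : IsQfam d Q)
    (hBm : ∀ b ∈ G, ∀ t, IsMonMat d t b (Bm b t)) (hσ : σ.1 ∈ G) (s : ℕ) :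
    Qtilde Q Bm (crystInv σ) s s * Qtilde Q Bm σ s s = 1 := by
  simpa [blockMul, blockOne_self] using blockMul_Qtilde_crystInv_Qtilde hcr hQ hBm hσ le_rfl

theorem sum_Qtilde_crystInv_mul_yMat (hcr : IsSplittingCrystal d G Λ) (hQ : IsQfam d Q)
    (hBm : ∀ b ∈ G, ∀ t, IsMonMat d t b (Bm b t)) (v : (Fin d → ℕ) → Fin r → ℂ)
    (hσ : σ.1 ∈ G) (s : ℕ) :
    ∑ u ∈ range (s + 1), Qtilde Q Bm (crystInv σ) s u * yMat d r Q Bm v u σ = vmat d r v s := by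
  simp only [yMat_eq_sum_Qtilde_mul]
  rw [← sum_blockMul_mul]
  refine (sum_congr rfl fun t ht => ?_).trans (sum_blockOne_mul (vmat d r v) s)
  rw [blockMul_Qtilde_crystInv_Qtilde hcr hQ hBm hσ (mem_range_succ_iff.mp ht)]

lemma Qtilde_crystMul_crystConj_mul_eq_blockMul (hcr : IsSplittingCrystal d G Λ)
    (hA : IsAdmissible G Λ A) (hQ : IsQfam d Q) (hBm : ∀ b ∈ G, ∀ t, IsMonMat d t b (Bm b t))
    (hAm : ∀ t, IsMonMat d t A (Am t)) (hγ : γ ∈ crystSet G Λ) (hσ : σ ∈ crystSet G Λ)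
    {s t : ℕ} (hts : t ≤ s) :
    Qtilde Q Bm (crystMul (crystConj A γ) (crystInv σ)) s t * Am t =
      blockMul (Qtilde Q Bm (crystInv σ)) (fun u t => Am u * Qtilde Q Bm γ u t) s t := by
  have hAu := hA.isUnit_det
  have hγu := hcr.isUnit_det hγ.1
  have hσu := hcr.isUnit_det hσ.1
  have hσ' : (crystInv σ).1 ∈ G := hcr.2.2.1 _ hσ.1
  have hρ : (crystMul (crystConj A γ) (crystInv σ)).1 ∈ G := hcr.2.1 _ (hA.2 γ hγ).1 _ hσ'
  refine ((isMonomialExpansion_Qtilde_of_mem hcr hQ hBm hρ).comp_mulVec hAm).unique ?_ hts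
  convert (isMonomialExpansion_Qtilde_of_mem hcr hQ hBm hσ').comp
    ((isMonomialExpansion_Qtilde_of_mem hcr hQ hBm hγ.1).mulVec_comp hAm) using 1
  funext x
  simp only [Function.comp_apply, crystInv_crystMul_crystConj hAu hγu hσu, crystInv_crystInv hσu,
    crystAct_crystMul_crystConj_mulVec hAu hγu]

theorem sum_Qtilde_crystMul_crystConj_mul (hcr : IsSplittingCrystal d G Λ)
    (hA : IsAdmissible G Λ A) (hQ : IsQfam d Q) (hBm : ∀ b ∈ G, ∀ t, IsMonMat d t b (Bm b t))
    (hAm : ∀ t, IsMonMat d t A (Am t)) (v : (Fin d → ℕ) → Fin r → ℂ)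
    (hγ : γ ∈ crystSet G Λ) (hσ : σ ∈ crystSet G Λ) (s : ℕ) (E : Matrix (Fin r) (Fin r) ℂ) :
    ∑ t ∈ range (s + 1),
        Qtilde Q Bm (crystMul (crystConj A γ) (crystInv σ)) s t * (Am t * vmat d r v t * E) =
      ∑ u ∈ range (s + 1), Qtilde Q Bm (crystInv σ) s u * (Am u * (yMat d r Q Bm v u γ * E)) := by
  calc _ = ∑ t ∈ range (s + 1), blockMul (Qtilde Q Bm (crystInv σ))
          (fun u t => Am u * Qtilde Q Bm γ u t) s t * (vmat d r v t * E) :=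
        sum_congr rfl fun t ht => by
          rw [← Qtilde_crystMul_crystConj_mul_eq_blockMul hcr hA hQ hBm hAm hγ hσ
            (mem_range_succ_iff.mp ht)]
          simp only [Matrix.mul_assoc]
    _ = _ := by
        rw [sum_blockMul_mul]
        simp only [yMat_eq_sum_Qtilde_mul, Matrix.sum_mul, Matrix.mul_sum, Matrix.mul_assoc]

lemma injOn_crystMul_crystConj_crystInv (hcr : IsSplittingCrystal d G Λ)
    (hA : IsAdmissible G Λ A) (hσ : σ ∈ crystSet G Λ) :
    Set.InjOn (fun γ => crystMul σ (crystConj A (crystInv γ))) (crystSet G Λ) := by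
  intro γ hγ γ' hγ' h
  have hAu := hA.isUnit_det
  have hγu := hcr.isUnit_det hγ.1
  have hγu' := hcr.isUnit_det hγ'.1
  have hact : crystAct (crystInv γ) = crystAct (crystInv γ') := funext fun x =>
    Matrix.mulVec_injective_of_isUnit ((Matrix.isUnit_iff_isUnit_det _).mpr hAu) <|
      crystAct_injective (hcr.isUnit_det hσ.1) <| by
        rw [← crystAct_crystMul_crystConj_mulVec hAu hγu,
          ← crystAct_crystMul_crystConj_mulVec hAu hγu']
        exact congrFun (congrArg crystAct h) _
  rw [← crystInv_crystInv hγu, ← crystInv_crystInv hγu',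
    eq_of_crystAct_eq (isUnit_det_crystInv hγu) hact]

lemma finsum_mem_coset_eq {M : Type*} [AddCommMonoid M] (hcr : IsSplittingCrystal d G Λ)
    (hA : IsAdmissible G Λ A) (hσ : σ ∈ crystSet G Λ) (f : CrystElem d → M) :
    ∑ᶠ τ ∈ {τ | ∃ γ₀ ∈ crystSet G Λ, τ = crystMul σ (crystConj A γ₀)}, f (crystInv τ) =
      ∑ᶠ γ ∈ crystSet G Λ, f (crystMul (crystConj A γ) (crystInv σ)) := by
  have hAu := hA.isUnit_det
  have hσu := hcr.isUnit_det hσ.1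
  have hcoset : {τ | ∃ γ₀ ∈ crystSet G Λ, τ = crystMul σ (crystConj A γ₀)} =
      (fun γ => crystMul σ (crystConj A (crystInv γ))) '' crystSet G Λ := by
    ext τ
    constructor
    · rintro ⟨γ₀, hγ₀, rfl⟩
      refine ⟨crystInv γ₀, hcr.crystInv_mem hγ₀, ?_⟩
      simp only [crystInv_crystInv (hcr.isUnit_det hγ₀.1)]
    · rintro ⟨γ, hγ, rfl⟩
      exact ⟨crystInv γ, hcr.crystInv_mem hγ, rfl⟩
  rw [hcoset, finsum_mem_image (injOn_crystMul_crystConj_crystInv hcr hA hσ)]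
  refine finsum_mem_congr rfl fun γ hγ => ?_
  have hγu := hcr.isUnit_det hγ.1
  have hρu := isUnit_det_crystMul (isUnit_det_crystConj hAu hγu) (isUnit_det_crystInv hσu)
  rw [← crystInv_crystMul_crystConj hAu hγu hσu, crystInv_crystInv hρu]

lemma finite_crystSet_inter_coeff_ne_zero (hcr : IsSplittingCrystal d G Λ)
    (hA : IsAdmissible G Λ A) (hσ : σ ∈ crystSet G Λ) {D : CrystElem d → Matrix (Fin r) (Fin r) ℂ}
    (hDfin : {γ | D γ ≠ 0}.Finite) :
    (crystSet G Λ ∩ {γ | D (crystMul (crystConj A γ) (crystInv σ)) ≠ 0}).Finite := by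
  have hAu := hA.isUnit_det
  have hσu := hcr.isUnit_det hσ.1
  have hinj : Set.InjOn (fun γ => crystMul (crystConj A γ) (crystInv σ)) (crystSet G Λ) :=
    fun γ hγ γ' hγ' h => injOn_crystMul_crystConj_crystInv hcr hA hσ hγ hγ' <| by
      simpa only [crystInv_crystMul_crystConj hAu (hcr.isUnit_det hγ.1) hσu,
        crystInv_crystMul_crystConj hAu (hcr.isUnit_det hγ'.1) hσu] using congrArg crystInv h
  refine Set.Finite.of_finite_image (hDfin.subset ?_) (hinj.mono Set.inter_subset_left)
  rintro _ ⟨γ, ⟨-, hγ⟩, rfl⟩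
  exact hγ

theorem finsum_mem_coset_eq_sum_Qtilde_mul (hcr : IsSplittingCrystal d G Λ)
    (hA : IsAdmissible G Λ A) (hQ : IsQfam d Q) (hBm : ∀ b ∈ G, ∀ t, IsMonMat d t b (Bm b t))
    (hAm : ∀ t, IsMonMat d t A (Am t)) {D : CrystElem d → Matrix (Fin r) (Fin r) ℂ}
    (hDfin : {γ | D γ ≠ 0}.Finite) (v : (Fin d → ℕ) → Fin r → ℂ) (hσ : σ ∈ crystSet G Λ)
    (s : ℕ) :
    ∑ᶠ τ ∈ {τ | ∃ γ₀ ∈ crystSet G Λ, τ = crystMul σ (crystConj A γ₀)},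
        ∑ t ∈ range (s + 1), (Q s t (crystInv τ).2 * (Bm (crystInv τ).1 t)⁻¹) *
          (Am t * vmat d r v t * D (crystInv τ)) =
      ∑ u ∈ range (s + 1), Qtilde Q Bm (crystInv σ) s u * (Am u * ∑ᶠ γ ∈ crystSet G Λ,
        yMat d r Q Bm v u γ * D (crystMul (crystConj A γ) (crystInv σ))) := by
  obtain ⟨W, hW⟩ := (finite_crystSet_inter_coeff_ne_zero hcr hA hσ hDfin).exists_finset_coe
  have finsum_eq_sum : ∀ {M : Type} [AddCommMonoid M] (f : CrystElem d → M),
      (∀ γ, D (crystMul (crystConj A γ) (crystInv σ)) = 0 → f γ = 0) →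
        ∑ᶠ γ ∈ crystSet G Λ, f γ = ∑ γ ∈ W, f γ := fun f hf =>
    finsum_mem_eq_sum_of_subset f (fun γ ⟨hγ, hfγ⟩ => hW ▸ ⟨hγ, mt (hf γ) hfγ⟩)
      (hW ▸ Set.inter_subset_left)
  refine (finsum_mem_coset_eq hcr hA hσ fun δ =>
    ∑ t ∈ range (s + 1), Qtilde Q Bm δ s t * (Am t * vmat d r v t * D δ)).trans ?_
  rw [finsum_mem_congr rfl fun γ hγ =>
    sum_Qtilde_crystMul_crystConj_mul hcr hA hQ hBm hAm v hγ hσ s _, finsum_eq_sum, sum_comm]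
  · refine sum_congr rfl fun u _ => ?_
    rw [finsum_eq_sum, Matrix.mul_sum, Matrix.mul_sum]
    intro γ hD
    simp [hD]
  · intro γ hD
    simp [hD]

end SplittingCrystal

theorem digit_conditions_equiv_general (d r p : ℕ)
    (G : Finset (Matrix (Fin d) (Fin d) ℝ)) (Λ : Set (Fin d → ℝ))
    (hcr : IsSplittingCrystal d G Λ)
    (A : Matrix (Fin d) (Fin d) ℝ) (hA : IsAdmissible G Λ A)
    (m : ℕ)
    (γdig : Fin m → CrystElem d) (hdig : ∀ i, γdig i ∈ crystSet G Λ)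
    (Q : (s : ℕ) → (t : ℕ) → (Fin d → ℝ) → Matrix (Sym (Fin d) s) (Sym (Fin d) t) ℂ)
    (hQ : IsQfam d Q)
    (Bm : Matrix (Fin d) (Fin d) ℝ → (t : ℕ) → Matrix (Sym (Fin d) t) (Sym (Fin d) t) ℂ)
    (hBm : ∀ b ∈ G, ∀ t, IsMonMat d t b (Bm b t))
    (Am : (t : ℕ) → Matrix (Sym (Fin d) t) (Sym (Fin d) t) ℂ)
    (hAm : ∀ t, IsMonMat d t A (Am t))
    (D : CrystElem d → Matrix (Fin r) (Fin r) ℂ)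
    (hDfin : {γ | D γ ≠ 0}.Finite)
    (v : (Fin d → ℕ) → Fin r → ℂ) :
    (∀ s < p, ∀ i : Fin m,
        yMat d r Q Bm v s (γdig i) =
          Am s * ∑ᶠ γ ∈ crystSet G Λ,
            yMat d r Q Bm v s γ * D (crystMul (crystConj A γ) (crystInv (γdig i)))) ↔
      (∀ s < p, ∀ i : Fin m,
        vmat d r v s =
          ∑ᶠ γ ∈ {τ | ∃ γ₀ ∈ crystSet G Λ, τ = crystMul (γdig i) (crystConj A γ₀)},
            ∑ t ∈ Finset.range (s + 1),
              (Q s t (crystInv γ).2 * (Bm (crystInv γ).1 t)⁻¹) *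
                (Am t * vmat d r v t * D (crystInv γ))) := by
  simp only [imp_forall_iff]
  rw [forall_comm, forall_comm (α := ℕ)]
  refine forall_congr' fun i => ?_
  have hdiag (s : ℕ) : ∃ K, K * Qtilde Q Bm (crystInv (γdig i)) s s = 1 :=
    ⟨_, mul_eq_one_comm.mp (Qtilde_crystInv_mul_Qtilde_self hcr hQ hBm (hdig i).1 s)⟩
  refine (forall_lt_sum_range_mul_eq_iff _ hdiag _ _ p).symm.trans (forall₂_congr fun s _ => ?_)
  rw [sum_Qtilde_crystInv_mul_yMat hcr hQ hBm v (hdig i).1,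
    finsum_mem_coset_eq_sum_Qtilde_mul hcr hA hQ hBm hAm hDfin v (hdig i)]

/-- Let `γ₁,…,γ_m` be a complete set of representatives of the left cosets
`Γ_i = γ_i AΓA⁻¹` of `AΓA⁻¹` in `Γ`, where `m = |det A|`. Then, for row vectors
`v_α` with `v₀ ≠ 0`, the condition
`y_[s](γ_i) = A_[s] ∑_{γ∈Γ} y_[s](γ) d_{AγA⁻¹γ_i⁻¹}` (for `0 ≤ s < p`, all `i`)
is equivalent to
`v_[s] = ∑_{γ∈Γ_i} ∑_{t=0}^{s} Q̃_[s,t](γ⁻¹) A_[t] v_[t] d_{γ⁻¹}`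
(for `0 ≤ s < p`, all `i`). -/
theorem digit_conditions_equiv (d r p : ℕ)
    (G : Finset (Matrix (Fin d) (Fin d) ℝ)) (Λ : Set (Fin d → ℝ))
    (hcr : IsSplittingCrystal d G Λ)
    (A : Matrix (Fin d) (Fin d) ℝ) (hA : IsAdmissible G Λ A)
    (m : ℕ) (hm : (m : ℝ) = |A.det|)
    (γdig : Fin m → CrystElem d) (hdig : ∀ i, γdig i ∈ crystSet G Λ)
    (hcoset : ∀ σ ∈ crystSet G Λ, ∃! i : Fin m,
      σ ∈ {τ | ∃ γ ∈ crystSet G Λ, τ = crystMul (γdig i) (crystConj A γ)})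
    (Q : (s : ℕ) → (t : ℕ) → (Fin d → ℝ) → Matrix (Sym (Fin d) s) (Sym (Fin d) t) ℂ)
    (hQ : IsQfam d Q)
    (Bm : Matrix (Fin d) (Fin d) ℝ → (t : ℕ) → Matrix (Sym (Fin d) t) (Sym (Fin d) t) ℂ)
    (hBm : ∀ b ∈ G, ∀ t, IsMonMat d t b (Bm b t))
    (Am : (t : ℕ) → Matrix (Sym (Fin d) t) (Sym (Fin d) t) ℂ)
    (hAm : ∀ t, IsMonMat d t A (Am t))
    (D : CrystElem d → Matrix (Fin r) (Fin r) ℂ)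
    (hDfin : {γ | D γ ≠ 0}.Finite) (hDsupp : ∀ γ, D γ ≠ 0 → γ ∈ crystSet G Λ)
    (v : (Fin d → ℕ) → Fin r → ℂ) (hv0 : v 0 ≠ 0) :
    (∀ s < p, ∀ i : Fin m,
        yMat d r Q Bm v s (γdig i) =
          Am s * ∑ᶠ γ ∈ crystSet G Λ,
            yMat d r Q Bm v s γ * D (crystMul (crystConj A γ) (crystInv (γdig i)))) ↔
      (∀ s < p, ∀ i : Fin m,
        vmat d r v s =
          ∑ᶠ γ ∈ {τ | ∃ γ₀ ∈ crystSet G Λ, τ = crystMul (γdig i) (crystConj A γ₀)},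
            ∑ t ∈ Finset.range (s + 1),
              (Q s t (crystInv γ).2 * (Bm (crystInv γ).1 t)⁻¹) *
                (Am t * vmat d r v t * D (crystInv γ))) :=
  digit_conditions_equiv_general d r p G Λ hcr A hA m γdig hdig Q hQ Bm hBm Am hAm D hDfin v
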